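/- For every integer d ≥ 1, the Hilbert function of the quotient of the weighted coordinate ring by the vanishing ideal of ℙ(w)(𝔽_q) satisfies H_{ℙ(w)(𝔽_q)}(d) ≤ H_{ℙ(w)(𝔽_q)}(d + lcm(w_0,…,w_m)·(q−1)). -/

import Mathlib

open MvPolynomial

noncomputable section

/-- `pSum q k = 1 + q + ⋯ + q^(k-1)`; so `p_m = pSum q (m+1)`. -/
def pSum (q k : ℕ) : ℕ := ∑ i ∈ Finset.range k, q ^ i

/-- Equivalence of nonzero vectors under weighted scaling by the algebraic closure. -/
def wRel (F : Type) [Field F] {m : ℕ} (w : Fin (m + 1) → ℕ)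
    (x y : {v : Fin (m + 1) → AlgebraicClosure F // v ≠ 0}) : Prop :=
  ∃ lam : (AlgebraicClosure F)ˣ, ∀ i, y.1 i = (lam : AlgebraicClosure F) ^ w i * x.1 i

/-- The weighted projective space `ℙ(w)` as set of orbits. -/
def PW (F : Type) [Field F] {m : ℕ} (w : Fin (m + 1) → ℕ) : Type :=
  Quot (wRel F w)

def PW.mk (F : Type) [Field F] {m : ℕ} (w : Fin (m + 1) → ℕ)
    (x : {v : Fin (m + 1) → AlgebraicClosure F // v ≠ 0}) : PW F w :=
  Quot.mk _ x

/-- The `𝔽_q`-rational points of `ℙ(w)`: orbits fixed by coordinatewise Frobenius. -/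
def ratPts (F : Type) [Field F] [Fintype F] {m : ℕ} (w : Fin (m + 1) → ℕ) :
    Set (PW F w) :=
  {c | ∃ x : {v : Fin (m + 1) → AlgebraicClosure F // v ≠ 0},
    PW.mk F w x = c ∧
    ∃ h : (fun i => x.1 i ^ Fintype.card F) ≠ (0 : Fin (m + 1) → AlgebraicClosure F),
      PW.mk F w ⟨fun i => x.1 i ^ Fintype.card F, h⟩ = c}

/-- `V_{ℙ(w)}(f)(𝔽_q)`: the rational points at which `f` vanishes. -/
def vanishSet (F : Type) [Field F] [Fintype F] {m : ℕ} (w : Fin (m + 1) → ℕ)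
    (f : MvPolynomial (Fin (m + 1)) F) : Set (PW F w) :=
  {c | c ∈ ratPts F w ∧ ∀ x, PW.mk F w x = c →
    MvPolynomial.eval x.1 (MvPolynomial.map (algebraMap F (AlgebraicClosure F)) f) = 0}

/-- `e_q(d; w)`: the maximal number of rational zeroes of a nonzero
weighted homogeneous polynomial of degree `d`. -/
def eMax (F : Type) [Field F] [Fintype F] {m : ℕ} (w : Fin (m + 1) → ℕ) (d : ℕ) : ℕ :=
  sSup {n | ∃ f : MvPolynomial (Fin (m + 1)) F,
    f ≠ 0 ∧ MvPolynomial.IsWeightedHomogeneous w f d ∧ n = (vanishSet F w f).ncard}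

/-- weighted degree of a monomial (exponent vector). -/
def wdeg {m : ℕ} (w : Fin (m + 1) → ℕ) (a : Fin (m + 1) →₀ ℕ) : ℕ := ∑ i, w i * a i

/-- degree-lexicographic order (weighted degree first, `x_0 < x_1 < ⋯ < x_m`). -/
def dlexLt {m : ℕ} (w : Fin (m + 1) → ℕ) (a b : Fin (m + 1) →₀ ℕ) : Prop :=
  wdeg w a < wdeg w b ∨
    (wdeg w a = wdeg w b ∧ ∃ i, a i < b i ∧ ∀ j, i < j → a j = b j)

/-- `a` is the initial monomial of `f` for the weighted deglex order. -/
def IsInitial (F : Type) [Field F] {m : ℕ} (w : Fin (m + 1) → ℕ)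
    (f : MvPolynomial (Fin (m + 1)) F) (a : Fin (m + 1) →₀ ℕ) : Prop :=
  a ∈ f.support ∧ ∀ b ∈ f.support, b ≠ a → dlexLt w b a

/-- The vanishing ideal `I(ℙ(w)(𝔽_q))`, generated by the homogeneous polynomials
vanishing at every rational point. -/
def vanishingIdeal (F : Type) [Field F] [Fintype F] {m : ℕ} (w : Fin (m + 1) → ℕ) :
    Ideal (MvPolynomial (Fin (m + 1)) F) :=
  Ideal.span {g | (∃ e, MvPolynomial.IsWeightedHomogeneous w g e) ∧
    ∀ c ∈ ratPts F w, ∀ x, PW.mk F w x = c →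
      MvPolynomial.eval x.1 (MvPolynomial.map (algebraMap F (AlgebraicClosure F)) g) = 0}

/-- `M̄`: monomials divisible by no initial monomial of a nonzero homogeneous
element of the vanishing ideal. -/
def Mbar (F : Type) [Field F] [Fintype F] {m : ℕ} (w : Fin (m + 1) → ℕ) :
    Set (Fin (m + 1) →₀ ℕ) :=
  {a | ¬ ∃ g : MvPolynomial (Fin (m + 1)) F, g ≠ 0 ∧ g ∈ vanishingIdeal F w ∧
    (∃ e, MvPolynomial.IsWeightedHomogeneous w g e) ∧ ∃ b, IsInitial F w g b ∧ b ≤ a}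

/-- `M̄_d`. -/
def MbarD (F : Type) [Field F] [Fintype F] {m : ℕ} (w : Fin (m + 1) → ℕ) (d : ℕ) :
    Set (Fin (m + 1) →₀ ℕ) :=
  {a ∈ Mbar F w | wdeg w a = d}

/-- `M̄_{d,i}`. -/
def MbarDI (F : Type) [Field F] [Fintype F] {m : ℕ} (w : Fin (m + 1) → ℕ) (d : ℕ)
    (i : Fin (m + 1)) : Set (Fin (m + 1) →₀ ℕ) :=
  {a ∈ MbarD F w d | (∀ t, t < i → a t = 0) ∧ 1 ≤ a i}

/-- The regularity set `reg(ℙ(w)(𝔽_q)) = {d ≥ 1 : |M̄_d| = p_m}`. -/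
def regSet (F : Type) [Field F] [Fintype F] {m : ℕ} (w : Fin (m + 1) → ℕ) : Set ℕ :=
  {d | 1 ≤ d ∧ (MbarD F w d).ncard = pSum (Fintype.card F) (m + 1)}

/-- Footprint bound at level `dtil`: number of monomials of `M̄_{dtil}` divisible by `a`. -/
def FB (F : Type) [Field F] [Fintype F] {m : ℕ} (w : Fin (m + 1) → ℕ) (dtil : ℕ)
    (a : Fin (m + 1) →₀ ℕ) : ℕ :=
  {b | b ∈ MbarD F w dtil ∧ a ≤ b}.ncard

/-- `FB_i`: number of monomials of `M̄_{dtil, i}` divisible by `a`. -/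
def FBi (F : Type) [Field F] [Fintype F] {m : ℕ} (w : Fin (m + 1) → ℕ) (dtil : ℕ)
    (i : Fin (m + 1)) (a : Fin (m + 1) →₀ ℕ) : ℕ :=
  {b | b ∈ MbarDI F w dtil i ∧ a ≤ b}.ncard

/-- Hilbert function of `𝔽_q[x]/I(ℙ(w)(𝔽_q))` at degree `d`. -/
def hilb (F : Type) [Field F] [Fintype F] {m : ℕ} (w : Fin (m + 1) → ℕ) (d : ℕ) : ℕ :=
  Module.finrank F
    (↥(weightedHomogeneousSubmodule F w d) ⧸
      (Submodule.comap (weightedHomogeneousSubmodule F w d).subtype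
        (Submodule.restrictScalars F (vanishingIdeal F w))))

/-- Denumerant: the number of representations `d = w0*i0 + w1*i1`. -/
def den (w0 w1 d : ℕ) : ℕ := {p : ℕ × ℕ | w0 * p.1 + w1 * p.2 = d}.ncard

/-! Every `𝔽_q`-rational point of `ℙ(w)` has a representative in `𝔽_q^{m+1} ∖ 0`, so by weighted
homogeneity a form lies in the vanishing ideal iff it vanishes on `𝔽_q^{m+1} ∖ 0`; thus `H(d)` is
the rank of evaluation of degree-`d` forms at these vectors. For `d ≥ 1` every monomial `x^a` of
degree `d` contains some `x_i`, and `x^a · x_i^{(L / w_i)(q - 1)}` (with `L = lcm w`) has degree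
`d + L(q - 1)` and the same values on `𝔽_q^{m+1}`, because `y^{q-1} = 1` for `y ∈ 𝔽_q^*`. Hence the
space of value functions in degree `d` lies inside the one in degree `d + L(q - 1)`. -/

open Polynomial in
theorem mem_range_algebraMap_of_pow_card_eq_self {F K : Type*} [Field F] [Fintype F] [Field K]
    [Algebra F K] {z : K} (hz : z ^ Fintype.card F = z) : z ∈ Set.range (algebraMap F K) := by
  set p : F[X] := Polynomial.X ^ Fintype.card F - Polynomial.X
  have hmonic : p.Monic := monic_X_pow_sub (by rw [degree_X]; exact_mod_cast Fintype.one_lt_card)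
  have hroots : p.roots.map (algebraMap F K) = (p.map (algebraMap F K)).roots := by
    refine hmonic.roots_map_of_card_eq_natDegree _ ?_
    rw [FiniteField.roots_X_pow_card_sub_X, FiniteField.X_pow_card_sub_X_natDegree_eq F
      Fintype.one_lt_card]
    rfl
  have hz' : z ∈ (p.map (algebraMap F K)).roots := by
    rw [mem_roots (hmonic.map _).ne_zero]
    simp [p, hz]
  obtain ⟨a, -, rfl⟩ := Multiset.mem_map.1 (hroots ▸ hz')
  exact ⟨a, rfl⟩

theorem MvPolynomial.IsWeightedHomogeneous.aeval_pow_weight_mul {σ R S : Type*} [CommSemiring R]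
    [CommSemiring S] [Algebra R S] {w : σ → ℕ} {e : ℕ} {f : MvPolynomial σ R}
    (hf : f.IsWeightedHomogeneous w e) (lam : S) (y : σ → S) :
    aeval (fun i => lam ^ w i * y i) f = lam ^ e * aeval y f := by
  conv_lhs => rw [f.as_sum]
  conv_rhs => rw [f.as_sum]
  simp only [map_sum, Finset.mul_sum, aeval_monomial]
  refine Finset.sum_congr rfl fun a ha => ?_
  have hwa : Finsupp.weight w a = e := hf (mem_support_iff.1 ha)
  rw [← hwa, Finsupp.weight_apply, Finsupp.sum, ← Finset.prod_pow_eq_pow_sum]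
  simp only [Finsupp.prod, mul_pow, Finset.prod_mul_distrib, smul_eq_mul, ← pow_mul, mul_comm]
  ring

section Shift

variable {σ F : Type*} [Field F] [Fintype F] {w : σ → ℕ} {L : ℕ}

theorem eval_monomial_add_single_of_ne_zero (v : σ → F)
    {a : σ →₀ ℕ} {i : σ} (hi : a i ≠ 0) {n : ℕ} (hn : Fintype.card F - 1 ∣ n) (c : F) :
    eval v (monomial (a + Finsupp.single i n) c) = eval v (monomial a c) := by
  classical
  rw [eval_monomial, eval_monomial, Finsupp.prod_add_index' (by simp) (by simp [pow_add]),
    Finsupp.prod_single_index (by simp)]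
  by_cases hv : v i = 0
  · rw [Finsupp.prod,
      Finset.prod_eq_zero (Finsupp.mem_support_iff.2 hi) (by rw [hv, zero_pow hi]), zero_mul,
      mul_zero]
  · obtain ⟨k, rfl⟩ := hn
    rw [pow_mul, FiniteField.pow_card_sub_one_eq_one _ hv, one_pow, mul_one]

theorem exists_eval_eq_monomial_of_dvd (hL : ∀ i, w i ∣ L) {a : σ →₀ ℕ} (ha : a ≠ 0) (c : F) :
    ∃ g ∈ weightedHomogeneousSubmodule F w (Finsupp.weight w a + L * (Fintype.card F - 1)),
      ∀ v, eval v g = eval v (monomial a c) := by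
  obtain ⟨i, hi⟩ := Finsupp.ne_iff.1 ha
  set n := L / w i * (Fintype.card F - 1)
  have hwn : Finsupp.weight w (Finsupp.single i n) = L * (Fintype.card F - 1) := by
    rw [Finsupp.weight_single, smul_eq_mul, mul_right_comm, Nat.div_mul_cancel (hL i)]
  refine ⟨monomial (a + Finsupp.single i n) c, ?_, fun v =>
    eval_monomial_add_single_of_ne_zero v hi (dvd_mul_left _ _) c⟩
  rw [mem_weightedHomogeneousSubmodule]
  exact isWeightedHomogeneous_monomial _ _ _ (by rw [map_add, hwn])

theorem exists_eval_eq_of_mem_weightedHomogeneousSubmodule (hL : ∀ i, w i ∣ L) {d : ℕ}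
    (hd : d ≠ 0) {f : MvPolynomial σ F} (hf : f ∈ weightedHomogeneousSubmodule F w d) :
    ∃ g ∈ weightedHomogeneousSubmodule F w (d + L * (Fintype.card F - 1)),
      ∀ v, eval v g = eval v f := by
  rw [f.as_sum]
  refine Finset.sum_induction _ (fun f => ∃ g ∈ weightedHomogeneousSubmodule F w
      (d + L * (Fintype.card F - 1)), ∀ v, eval v g = eval v f)
    (fun _ _ ⟨g₁, hg₁, h₁⟩ ⟨g₂, hg₂, h₂⟩ => ⟨g₁ + g₂, add_mem hg₁ hg₂, by simp [h₁, h₂]⟩)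
    ⟨0, zero_mem _, by simp⟩ fun a ha => ?_
  have hwa : Finsupp.weight w a = d := ((mem_weightedHomogeneousSubmodule _ _ _ _).1 hf)
    (mem_support_iff.1 ha)
  obtain ⟨g, hg, hgv⟩ := exists_eval_eq_monomial_of_dvd hL (a := a)
    (fun ha0 => hd (by rw [← hwa, ha0, map_zero])) (coeff a f)
  exact ⟨g, hwa ▸ hg, hgv⟩

end Shift

section WeightedProjectiveSpace

variable {F : Type} [Field F] {m : ℕ} {w : Fin (m + 1) → ℕ}

theorem wRel_equivalence : Equivalence (wRel F w) where
  refl _ := ⟨1, fun _ => by simp⟩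
  symm := by
    rintro x y ⟨l, hl⟩
    refine ⟨l⁻¹, fun i => ?_⟩
    rw [hl i, Units.val_inv_eq_inv_val, inv_pow, inv_mul_cancel_left₀ (pow_ne_zero _ l.ne_zero)]
  trans := by
    rintro x y z ⟨l, hl⟩ ⟨l', hl'⟩
    refine ⟨l' * l, fun i => ?_⟩
    rw [hl' i, hl i, Units.val_mul, mul_pow, mul_assoc]

theorem PW.mk_eq_mk_iff {x y : {v : Fin (m + 1) → AlgebraicClosure F // v ≠ 0}} :
    PW.mk F w x = PW.mk F w y ↔ wRel F w x y :=
  Quot.eq.trans wRel_equivalence.eqvGen_iff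

variable (F w) in
def PW.ofBase (v : {v : Fin (m + 1) → F // v ≠ 0}) : PW F w :=
  PW.mk F w ⟨fun i => algebraMap F _ (v.1 i), fun h =>
    v.2 (funext fun i =>
      (algebraMap F (AlgebraicClosure F)).injective (by simpa using congrFun h i))⟩

theorem eval_map_eq_zero_iff_of_mk_eq_ofBase {e : ℕ} {f : MvPolynomial (Fin (m + 1)) F}
    (hf : f.IsWeightedHomogeneous w e) {x : {v : Fin (m + 1) → AlgebraicClosure F // v ≠ 0}}
    {v : {v : Fin (m + 1) → F // v ≠ 0}} (hx : PW.mk F w x = PW.ofBase F w v) :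
    eval x.1 (map (algebraMap F (AlgebraicClosure F)) f) = 0 ↔ eval v.1 f = 0 := by
  obtain ⟨l, hl⟩ := PW.mk_eq_mk_iff.1 hx.symm
  rw [eval_map, ← aeval_def, funext hl, hf.aeval_pow_weight_mul]
  change _ * aeval (fun i => Algebra.ofId F (AlgebraicClosure F) (v.1 i)) f = 0 ↔ _
  rw [← comp_aeval_apply]
  simp [l.ne_zero]

variable [Fintype F]

theorem PW.mk_mem_ratPts {x : {v : Fin (m + 1) → AlgebraicClosure F // v ≠ 0}}
    (hx : ∀ i, x.1 i ^ Fintype.card F = x.1 i) : PW.mk F w x ∈ ratPts F w := by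
  have hfix : (fun i => x.1 i ^ Fintype.card F) = x.1 := funext hx
  exact ⟨x, rfl, by rw [hfix]; exact x.2, by congr 1; exact Subtype.ext hfix⟩

theorem PW.ofBase_mem_ratPts (v : {v : Fin (m + 1) → F // v ≠ 0}) :
    PW.ofBase F w v ∈ ratPts F w :=
  PW.mk_mem_ratPts fun i => by rw [← map_pow, FiniteField.pow_card]

theorem exists_rep_pow_card_eq_self {c : PW F w} (hc : c ∈ ratPts F w) :
    ∃ y, PW.mk F w y = c ∧ ∀ i, y.1 i ^ Fintype.card F = y.1 i := by
  obtain ⟨x, rfl, _, hfrob⟩ := hc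
  obtain ⟨l, hl⟩ := PW.mk_eq_mk_iff.1 hfrob.symm
  have hl : ∀ i, x.1 i ^ Fintype.card F = l ^ w i * x.1 i := hl
  have hq : 1 < Fintype.card F := Fintype.one_lt_card
  -- rescaling by a `(q - 1)`-th root of `l⁻¹` absorbs the factor `l ^ w i` created by Frobenius
  obtain ⟨ν, hν⟩ := IsAlgClosed.exists_pow_nat_eq (n := Fintype.card F - 1)
    ((l⁻¹ : (AlgebraicClosure F)ˣ) : AlgebraicClosure F) (by omega)
  have hν0 : ν ≠ 0 := by
    rintro rfl
    exact (l⁻¹).ne_zero (by rw [← hν, zero_pow (by omega)])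
  have hνq : ν ^ Fintype.card F * l = ν := by
    rw [← Nat.sub_add_cancel hq.le, pow_succ', mul_assoc, hν, Units.inv_mul, mul_one]
  refine ⟨⟨fun i => ν ^ w i * x.1 i, fun h => x.2 (funext fun i => by
    simpa [hν0] using congrFun h i)⟩, (PW.mk_eq_mk_iff.2 ⟨Units.mk0 ν hν0, fun _ => rfl⟩).symm,
    fun i => ?_⟩
  calc (ν ^ w i * x.1 i) ^ Fintype.card F = (ν ^ Fintype.card F * l) ^ w i * x.1 i := by
        rw [mul_pow, ← pow_mul, mul_comm (w i), pow_mul, hl i, mul_pow, mul_assoc]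
    _ = ν ^ w i * x.1 i := by rw [hνq]

theorem exists_ofBase_eq {c : PW F w} (hc : c ∈ ratPts F w) : ∃ v, PW.ofBase F w v = c := by
  obtain ⟨y, rfl, hy⟩ := exists_rep_pow_card_eq_self hc
  choose v hv using fun i => mem_range_algebraMap_of_pow_card_eq_self (hy i)
  refine ⟨⟨v, fun h => y.2 (funext fun i => by simp [← hv i, h])⟩, ?_⟩
  exact congrArg (PW.mk F w) (Subtype.ext (funext hv))

theorem vanishingIdeal_le :
    vanishingIdeal F w ≤ MvPolynomial.vanishingIdeal F {v : Fin (m + 1) → F | v ≠ 0} :=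
  Ideal.span_le.2 fun _ ⟨⟨_, hg⟩, hvan⟩ v hv =>
    (eval_map_eq_zero_iff_of_mk_eq_ofBase hg (v := ⟨v, hv⟩) rfl).1
      (hvan _ (PW.ofBase_mem_ratPts _) _ rfl)

theorem mem_vanishingIdeal_iff_of_isWeightedHomogeneous {d : ℕ}
    {f : MvPolynomial (Fin (m + 1)) F} (hf : f.IsWeightedHomogeneous w d) :
    f ∈ vanishingIdeal F w ↔
      f ∈ MvPolynomial.vanishingIdeal F {v : Fin (m + 1) → F | v ≠ 0} := by
  refine ⟨fun h => vanishingIdeal_le h, fun h => Ideal.subset_span ⟨⟨d, hf⟩, ?_⟩⟩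
  rintro c hc x rfl
  obtain ⟨v, hv⟩ := exists_ofBase_eq hc
  exact (eval_map_eq_zero_iff_of_mk_eq_ofBase hf hv.symm).2 (h v.1 v.2)

variable (F w) in
def evalOnBasePoints (d : ℕ) :
    weightedHomogeneousSubmodule F w d →ₗ[F] ({v : Fin (m + 1) → F // v ≠ 0} → F) :=
  (LinearMap.pi fun v => (aeval v.1).toLinearMap).comp (weightedHomogeneousSubmodule F w d).subtype

theorem ker_evalOnBasePoints (d : ℕ) :
    LinearMap.ker (evalOnBasePoints F w d) =
      (Submodule.restrictScalars F (vanishingIdeal F w)).comap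
        (weightedHomogeneousSubmodule F w d).subtype := by
  ext f
  rw [Submodule.mem_comap, Submodule.restrictScalars_mem, Submodule.subtype_apply,
    mem_vanishingIdeal_iff_of_isWeightedHomogeneous f.2, MvPolynomial.mem_vanishingIdeal_iff,
    LinearMap.mem_ker, funext_iff, Subtype.forall]
  rfl

theorem hilb_eq_finrank_range_evalOnBasePoints (d : ℕ) :
    hilb F w d = Module.finrank F (LinearMap.range (evalOnBasePoints F w d)) := by
  rw [hilb, ← ker_evalOnBasePoints]
  exact (LinearMap.quotKerEquivRange _).finrank_eq

theorem range_evalOnBasePoints_le {L d : ℕ} (hL : ∀ i, w i ∣ L) (hd : d ≠ 0) :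
    LinearMap.range (evalOnBasePoints F w d) ≤
      LinearMap.range (evalOnBasePoints F w (d + L * (Fintype.card F - 1))) := by
  rintro _ ⟨f, rfl⟩
  obtain ⟨g, hg, hgf⟩ := exists_eval_eq_of_mem_weightedHomogeneousSubmodule hL hd f.2
  exact ⟨⟨g, hg⟩, funext fun v => hgf v.1⟩

end WeightedProjectiveSpace

/-- Lemma 2.8 of the paper: monotonicity of the Hilbert function
along steps of size `lcm(w)·(q−1)`. -/
theorem stmt5 (F : Type) [Field F] [Fintype F] (m : ℕ) (w : Fin (m + 1) → ℕ)
    (d : ℕ) (hd : 1 ≤ d) :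
    hilb F w d ≤ hilb F w (d + Finset.univ.lcm w * (Fintype.card F - 1)) := by
  rw [hilb_eq_finrank_range_evalOnBasePoints, hilb_eq_finrank_range_evalOnBasePoints]
  exact Submodule.finrank_mono
    (range_evalOnBasePoints_le (fun i => Finset.dvd_lcm (Finset.mem_univ i)) (by omega))
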